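/- Let a, b ∈ H² with Im(a) ≠ Im(b) and Re(a) ≠ Re(b), and set d = ( Im(a·conj(b)) + sgn(Re(a−b))·|a−b|·√(Im(a)·Im(b)) ) / Im(a−b). Then d is a real number and there exists c ∈ ℂ with Im(c) > 0, Re(c) = d, and |c − a| = |c − b| = Im(c); that is, the circle through a and b centered at c is tangent to the real axis at the point d. -/

import Mathlib

open Complex ComplexConjugate

/-!
A circle tangent to the real axis at `d`, with centre `c = d + i r`, passes through a point `z` of
the upper half plane exactly when `(d - Re z)² + (Im z)² = 2 r Im z`. Solving this for `r` with
`z = a` and substituting into the equation for `z = b` leaves a quadratic equation in `d`, and the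
given value of `d` is one of its two roots: the sign of `Re (a - b)` picks the root, and
`sgn² = 1` is what makes the square of the radical term come out right.
-/

lemma Real.sign_sq_of_ne_zero {r : ℝ} (hr : r ≠ 0) : Real.sign r ^ 2 = 1 := by
  rcases Real.sign_apply_eq_of_ne_zero r hr with h | h <;> simp [h]

lemma Complex.norm_sub_eq_im_iff {c z : ℂ} (hc : 0 ≤ c.im) :
    ‖c - z‖ = c.im ↔ (c.re - z.re) ^ 2 + z.im ^ 2 = 2 * c.im * z.im := by
  rw [← sq_eq_sq₀ (norm_nonneg _) hc, Complex.sq_norm, Complex.normSq_apply, Complex.sub_re,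
    Complex.sub_im]
  constructor <;> intro h <;> linear_combination h

lemma exists_tangent_circle_of_tangency_eq {a b : ℂ} (hia : 0 < a.im) {d : ℝ}
    (hd : b.im * ((d - a.re) ^ 2 + a.im ^ 2) = a.im * ((d - b.re) ^ 2 + b.im ^ 2)) :
    ∃ c : ℂ, 0 < c.im ∧ c.re = d ∧ ‖c - a‖ = c.im ∧ ‖c - b‖ = c.im := by
  set r := ((d - a.re) ^ 2 + a.im ^ 2) / (2 * a.im) with hr_def
  have hr : 0 < r := by positivity
  have hra : (d - a.re) ^ 2 + a.im ^ 2 = 2 * r * a.im := by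
    rw [hr_def]; field_simp
  have hrb : (d - b.re) ^ 2 + b.im ^ 2 = 2 * r * b.im := by
    apply mul_left_cancel₀ hia.ne'
    linear_combination -hd + b.im * hra
  exact ⟨⟨d, r⟩, hr, rfl, (Complex.norm_sub_eq_im_iff hr.le).2 hra,
    (Complex.norm_sub_eq_im_iff hr.le).2 hrb⟩

lemma tangency_eq_of_eq_div {a b : ℂ} (hab : 0 ≤ a.im * b.im) (him : a.im ≠ b.im)
    (hre : a.re ≠ b.re) {d : ℝ}
    (hd : d = ((a * conj b).im +
        Real.sign ((a - b).re) * ‖a - b‖ * Real.sqrt (a.im * b.im)) / (a - b).im) :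
    b.im * ((d - a.re) ^ 2 + a.im ^ 2) = a.im * ((d - b.re) ^ 2 + b.im ^ 2) := by
  set S := Real.sign ((a - b).re) * ‖a - b‖ * Real.sqrt (a.im * b.im)
  have hne : a.im - b.im ≠ 0 := sub_ne_zero.2 him
  have hdS : (a.im - b.im) * d = a.im * b.re - a.re * b.im + S := by
    rw [hd, Complex.sub_im, Complex.mul_im, Complex.conj_re, Complex.conj_im]
    field_simp
    ring
  have hS : S ^ 2 = ((a.re - b.re) ^ 2 + (a.im - b.im) ^ 2) * (a.im * b.im) := by
    rw [mul_pow, mul_pow, Real.sign_sq_of_ne_zero (by simpa [sub_eq_zero] using hre), one_mul,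
      Real.sq_sqrt hab, Complex.sq_norm, Complex.normSq_apply, Complex.sub_re, Complex.sub_im]
    ring
  apply mul_left_cancel₀ (pow_ne_zero 2 hne)
  linear_combination
    (-(a.im - b.im) * ((a.im - b.im) * d + S - (a.im * b.re - a.re * b.im))) * hdS -
      (a.im - b.im) * hS

theorem tangent_circle_point (a b : ℂ) (hia : 0 < a.im) (hib : 0 < b.im)
    (him : a.im ≠ b.im) (hre : a.re ≠ b.re)
    (d : ℝ)
    (hd : d = ((a * conj b).im +
        Real.sign ((a - b).re) * ‖a - b‖ * Real.sqrt (a.im * b.im)) /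
        (a - b).im) :
    ∃ c : ℂ, 0 < c.im ∧ c.re = d ∧
      ‖c - a‖ = c.im ∧ ‖c - b‖ = c.im :=
  exists_tangent_circle_of_tangency_eq hia
    (tangency_eq_of_eq_div (mul_pos hia hib).le him hre hd)
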